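/- arXiv:2411.11246 — 2 statements merged into one kernel-verified Lean document; each statement's English description precedes it below -/
import Mathlib

section
/- Let G ⊂ ℝⁿ (n ≥ 1) be a convex body. Then there exists C > 0 such that for all nonempty compact convex subsets K, L of G, ρ_G(K,L) ≤ C·d_H(K,L). -/
open MeasureTheory Metric Pointwise

/-- `ρ_G(K,L) := 2·Vol(G + K ∪̃ L) − Vol(G + K) − Vol(G + L)`. -/
noncomputable def rhoDist {n : ℕ} (G K L : Set (EuclideanSpace ℝ (Fin n))) : ℝ :=
  2 * (volume (G + closure (convexHull ℝ (K ∪ L)))).toReal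
    - (volume (G + K)).toReal - (volume (G + L)).toReal

/-!
If `closedBall x r ⊆ G` and `k ∈ K`, the convex set `G + K` contains `closedBall (x + k) r`, so
its `d`-neighbourhood `G + K + closedBall 0 d` lies in the homothetic copy of `G + K` of ratio
`1 + d / r` about `x + k`, of volume `(1 + d / r) ^ n * Vol (G + K)`. Since `d ≤ diam G`, this
exceeds `Vol (G + K)` by at most a constant (depending only on `G`) times `d`. With
`d = d_H(K, L)`, the closed convex hull of `K ∪ L` lies in the `d`-neighbourhoods of both `K` and
`L`, which bounds each of the two differences making up `ρ_G(K, L)`.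
-/

lemma one_add_pow_sub_one_le {t T : ℝ} (ht : 0 ≤ t) (htT : t ≤ T) (n : ℕ) :
    (1 + t) ^ n - 1 ≤ n * (1 + T) ^ (n - 1) * t := by
  have h := abs_pow_sub_pow_le (1 + t) 1 n
  rw [one_pow, add_sub_cancel_left, abs_of_nonneg ht, abs_one,
    abs_of_nonneg (by linarith : (0 : ℝ) ≤ 1 + t), max_eq_left (by linarith)] at h
  calc (1 + t) ^ n - 1 ≤ t * n * (1 + t) ^ (n - 1) := (le_abs_self _).trans h
    _ ≤ t * n * (1 + T) ^ (n - 1) := by gcongr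
    _ = n * (1 + T) ^ (n - 1) * t := by ring

namespace Metric

variable {α : Type*} [PseudoMetricSpace α]

lemma subset_cthickening_hausdorffDist {s t : Set α} (hst : hausdorffEDist s t ≠ ⊤) :
    t ⊆ cthickening (hausdorffDist s t) s := by
  intro y hy
  rw [mem_cthickening_iff, hausdorffDist, ENNReal.ofReal_toReal hst, hausdorffEDist_comm]
  exact infEDist_le_hausdorffEDist_of_mem hy

end Metric

section Convex

variable {E : Type*} [NormedAddCommGroup E] [NormedSpace ℝ E]

lemma closure_convexHull_union_subset_cthickening {K L : Set E} (hK : Convex ℝ K)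
    (hKL : hausdorffEDist K L ≠ ⊤) :
    closure (convexHull ℝ (K ∪ L)) ⊆ cthickening (hausdorffDist K L) K :=
  closure_minimal
    (convexHull_min (Set.union_subset (self_subset_cthickening K)
      (subset_cthickening_hausdorffDist hKL)) (hK.cthickening _))
    isClosed_cthickening

lemma Convex.add_closedBall_subset_smul {A : Set E} (hA : Convex ℝ A) {r d : ℝ} (hr : 0 < r)
    (hd : 0 ≤ d) (hball : closedBall 0 r ⊆ A) :
    A + closedBall 0 d ⊆ (1 + d / r) • A := by
  have hdr : 0 ≤ d / r := div_nonneg hd hr.le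
  have hscale : closedBall (0 : E) d = (d / r) • closedBall 0 r := by
    rw [smul_closedBall _ _ hr.le, smul_zero, Real.norm_of_nonneg hdr, div_mul_cancel₀ _ hr.ne']
  rw [hA.add_smul zero_le_one hdr, one_smul, hscale]
  exact Set.add_subset_add_left (Set.smul_set_mono hball)

variable [MeasurableSpace E] [BorelSpace E] [FiniteDimensional ℝ E]
  (μ : Measure E) [μ.IsAddHaarMeasure]

lemma Convex.measure_add_closedBall_le {A : Set E} (hA : Convex ℝ A) {x : E} {r d : ℝ}
    (hr : 0 < r) (hd : 0 ≤ d) (hball : closedBall x r ⊆ A) :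
    μ (A + closedBall 0 d) ≤ ENNReal.ofReal ((1 + d / r) ^ Module.finrank ℝ E) * μ A := by
  have hball' : closedBall 0 r ⊆ -x +ᵥ A := by
    simpa [vadd_closedBall] using Set.vadd_set_mono (a := -x) hball
  calc μ (A + closedBall 0 d) = μ ((-x +ᵥ A) + closedBall 0 d) := by
        rw [vadd_add_assoc, measure_vadd]
    _ ≤ μ ((1 + d / r) • (-x +ᵥ A)) :=
        measure_mono ((hA.vadd _).add_closedBall_subset_smul hr hd hball')
    _ = _ := by rw [μ.addHaar_smul_of_nonneg (by positivity), measure_vadd]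

lemma Convex.measureReal_add_closedBall_le {A : Set E} (hA : Convex ℝ A) {x : E} {r d T : ℝ}
    (hr : 0 < r) (hd : 0 ≤ d) (hdT : d ≤ T) (hball : closedBall x r ⊆ A) (hAfin : μ A ≠ ⊤) :
    μ.real (A + closedBall 0 d) ≤ μ.real A
      + Module.finrank ℝ E * (1 + T / r) ^ (Module.finrank ℝ E - 1) / r * μ.real A * d := by
  set n := Module.finrank ℝ E
  have hscale : μ.real (A + closedBall 0 d) ≤ (1 + d / r) ^ n * μ.real A := by
    have h := ENNReal.toReal_mono (ENNReal.mul_ne_top ENNReal.ofReal_ne_top hAfin)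
      (hA.measure_add_closedBall_le μ hr hd hball)
    rwa [ENNReal.toReal_mul, ENNReal.toReal_ofReal (by positivity)] at h
  have hgrowth := one_add_pow_sub_one_le (div_nonneg hd hr.le)
    (div_le_div_of_nonneg_right hdT hr.le) n
  calc μ.real (A + closedBall 0 d) ≤ (1 + d / r) ^ n * μ.real A := hscale
    _ = μ.real A + ((1 + d / r) ^ n - 1) * μ.real A := by ring
    _ ≤ μ.real A + n * (1 + T / r) ^ (n - 1) * (d / r) * μ.real A := by gcongr
    _ = _ := by ring

lemma measureReal_add_le_of_subset_cthickening {G K S : Set E} (hGcv : Convex ℝ G)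
    (hGcp : IsCompact G) {x : E} {r : ℝ} (hr : 0 < r) (hball : closedBall x r ⊆ G)
    (hKcv : Convex ℝ K) (hKcp : IsCompact K) (hKne : K.Nonempty) (hKG : K ⊆ G) {d : ℝ}
    (hd : 0 ≤ d) (hdG : d ≤ diam G) (hS : S ⊆ cthickening d K) :
    μ.real (G + S) ≤ μ.real (G + K) + Module.finrank ℝ E * (1 + diam G / r)
      ^ (Module.finrank ℝ E - 1) / r * μ.real (G + G) * d := by
  obtain ⟨k, hk⟩ := hKne
  have hGKcp : IsCompact (G + K) := hGcp.add hKcp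
  have hball' : closedBall (x + k) r ⊆ G + K := by
    rw [← closedBall_add_singleton]
    exact Set.add_subset_add hball (Set.singleton_subset_iff.2 hk)
  have hsub : G + S ⊆ (G + K) + closedBall 0 d := by
    rw [add_assoc, hKcp.add_closedBall_zero hd]
    exact Set.add_subset_add_left hS
  calc μ.real (G + S) ≤ μ.real ((G + K) + closedBall 0 d) :=
        measureReal_mono hsub ((hGKcp.add (isCompact_closedBall 0 d)).measure_lt_top (μ := μ)).ne
    _ ≤ _ := (hGcv.add hKcv).measureReal_add_closedBall_le μ hr hd hdG hball'
        (hGKcp.measure_lt_top (μ := μ)).ne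
    _ ≤ _ := by
        gcongr
        exact ((hGcp.add hGcp).measure_lt_top (μ := μ)).ne

end Convex

theorem stmt2_general {n : ℕ} (G : Set (EuclideanSpace ℝ (Fin n)))
    (hGcv : Convex ℝ G) (hGcp : IsCompact G) (hGint : (interior G).Nonempty) :
    ∃ C : ℝ, 0 < C ∧ ∀ K L : Set (EuclideanSpace ℝ (Fin n)),
      K.Nonempty → IsCompact K → Convex ℝ K → K ⊆ G →
      L.Nonempty → IsCompact L → Convex ℝ L → L ⊆ G →
      rhoDist G K L ≤ C * hausdorffDist K L := by
  obtain ⟨x, hx⟩ := hGint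
  obtain ⟨r, hr, hball⟩ := nhds_basis_closedBall.mem_iff.1 (mem_interior_iff_mem_nhds.1 hx)
  set c := Module.finrank ℝ (EuclideanSpace ℝ (Fin n)) * (1 + diam G / r)
    ^ (Module.finrank ℝ (EuclideanSpace ℝ (Fin n)) - 1) / r * volume.real (G + G)
  refine ⟨2 * max c 1, by positivity, ?_⟩
  intro K L hKne hKcp hKcv hKG hLne hLcp hLcv hLG
  have hKL : hausdorffEDist K L ≠ ⊤ :=
    hausdorffEDist_ne_top_of_nonempty_of_bounded hKne hLne hKcp.isBounded hLcp.isBounded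
  have hd : 0 ≤ hausdorffDist K L := hausdorffDist_nonneg
  have hdG : hausdorffDist K L ≤ diam G :=
    (hausdorffDist_le_diam hKne hKcp.isBounded hLne hLcp.isBounded).trans
      (diam_mono (Set.union_subset hKG hLG) hGcp.isBounded)
  have hMK := closure_convexHull_union_subset_cthickening hKcv hKL
  have hML : closure (convexHull ℝ (K ∪ L)) ⊆ cthickening (hausdorffDist K L) L := by
    rw [Set.union_comm, hausdorffDist_comm]
    exact closure_convexHull_union_subset_cthickening hLcv (by rwa [hausdorffEDist_comm])
  have hK := measureReal_add_le_of_subset_cthickening volume hGcv hGcp hr hball hKcv hKcp hKne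
    hKG hd hdG hMK
  have hL := measureReal_add_le_of_subset_cthickening volume hGcv hGcp hr hball hLcv hLcp hLne
    hLG hd hdG hML
  have hc : c * hausdorffDist K L ≤ max c 1 * hausdorffDist K L :=
    mul_le_mul_of_nonneg_right (le_max_left c 1) hd
  unfold rhoDist
  change 2 * volume.real _ - volume.real (G + K) - volume.real (G + L) ≤ _
  linarith

theorem stmt2 {n : ℕ} (hn : 1 ≤ n) (G : Set (EuclideanSpace ℝ (Fin n)))
    (hGcv : Convex ℝ G) (hGcp : IsCompact G) (hGint : (interior G).Nonempty) :
    ∃ C : ℝ, 0 < C ∧ ∀ K L : Set (EuclideanSpace ℝ (Fin n)),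
      K.Nonempty → IsCompact K → Convex ℝ K → K ⊆ G →
      L.Nonempty → IsCompact L → Convex ℝ L → L ⊆ G →
      rhoDist G K L ≤ C * hausdorffDist K L :=
  stmt2_general G hGcv hGcp hGint
end

section
/- Let G ⊂ ℝⁿ (n ≥ 1) be a convex body in which a ball of radius r > 0 rolls freely. Then there exists C > 0 such that for all nonempty compact convex subsets K, L of G, C·d_H(K,L)^((n+1)/2) ≤ ρ_G(K,L). -/
/-!
Let `x₀ ∈ K` be at distance `d ≥ d_H(K, L)` from `L` (or the other way round) and let `u` be the
unit normal of the hyperplane through the nearest point of `L` that separates it from `x₀`. Pushing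
the rolling ball of `G` against the supporting hyperplane of `G` in direction `u` and translating by
the top point of `L` gives a ball `B(c, r) ⊆ G + L` touching the supporting hyperplane `H` of
`G + L`, while `G + conv(K ∪ L)` contains a point at height `d` above `H`. By convexity it contains
the cone over `B(c, r)` with that apex, hence a cap of height `≍ d` of a ball of radius `≥ r / 2`
beyond `H`. A coordinate box in that cap has volume `≳ d · (r d) ^ ((n - 1) / 2)`, and it lies in
`G + conv(K ∪ L)` but not in `G + L`.
-/

open MeasureTheory Metric Pointwise

open Module RealInnerProductSpace

def BallRollsFreely {α : Type*} [PseudoMetricSpace α] (G : Set α) (r : ℝ) : Prop :=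
  ∀ p ∈ frontier G, ∃ x, p ∈ closedBall x r ∧ closedBall x r ⊆ G

theorem exists_hausdorffDist_le_infDist {α : Type*} [PseudoMetricSpace α] {K L : Set α}
    (hK : IsCompact K) (hKne : K.Nonempty) (hL : IsCompact L) (hLne : L.Nonempty) :
    (∃ x ∈ K, hausdorffDist K L ≤ infDist x L) ∨
      ∃ y ∈ L, hausdorffDist K L ≤ infDist y K := by
  obtain ⟨x, hx, hxmax⟩ := hK.exists_isMaxOn hKne (continuous_infDist_pt L).continuousOn
  obtain ⟨y, hy, hymax⟩ := hL.exists_isMaxOn hLne (continuous_infDist_pt K).continuousOn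
  have h := hausdorffDist_le_of_infDist (le_max_of_le_left infDist_nonneg)
    (fun x' hx' => (isMaxOn_iff.1 hxmax x' hx').trans (le_max_left _ _))
    (fun y' hy' => (isMaxOn_iff.1 hymax y' hy').trans (le_max_right _ _))
  rcases le_max_iff.1 h with h | h
  exacts [Or.inl ⟨x, hx, h⟩, Or.inr ⟨y, hy, h⟩]

section NormedSpace

variable {E : Type*} [NormedAddCommGroup E] [NormedSpace ℝ E]

theorem Convex.closedBall_add_smul_sub_subset {C : Set E} (hC : Convex ℝ C) {c z : E} {r t : ℝ}
    (hball : closedBall c r ⊆ C) (hz : z ∈ C) (ht0 : 0 ≤ t) (ht1 : t < 1) :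
    closedBall (c + t • (z - c)) ((1 - t) * r) ⊆ C := by
  intro y hy
  have h1t : 0 < 1 - t := by linarith
  have hy' : c + (1 - t)⁻¹ • (y - (c + t • (z - c))) ∈ closedBall c r := by
    rw [mem_closedBall, dist_eq_norm, add_sub_cancel_left, norm_smul, norm_inv,
      Real.norm_of_nonneg h1t.le, inv_mul_le_iff₀ h1t, ← dist_eq_norm]
    exact hy
  convert hC (hball hy') hz h1t.le ht0 (by ring) using 1
  rw [smul_add, smul_inv_smul₀ h1t.ne']
  module

theorem subset_closure_convexHull_union_left (K L : Set E) :
    K ⊆ closure (convexHull ℝ (K ∪ L)) :=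
  Set.subset_union_left.trans ((subset_convexHull ℝ _).trans subset_closure)

theorem subset_closure_convexHull_union_right (K L : Set E) :
    L ⊆ closure (convexHull ℝ (K ∪ L)) :=
  Set.subset_union_right.trans ((subset_convexHull ℝ _).trans subset_closure)

theorem closure_convexHull_union_subset {G K L : Set E} (hG : Convex ℝ G) (hGc : IsClosed G)
    (hKG : K ⊆ G) (hLG : L ⊆ G) : closure (convexHull ℝ (K ∪ L)) ⊆ G :=
  closure_minimal (convexHull_min (Set.union_subset hKG hLG) hG) hGc

end NormedSpace

section InnerProductSpace

variable {E : Type*} [NormedAddCommGroup E] [InnerProductSpace ℝ E]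

theorem mem_frontier_of_isMaxOn_inner {G : Set E} (hG : IsClosed G) {u g : E} (hu : u ≠ 0)
    (hg : g ∈ G) (hmax : IsMaxOn (⟪u, ·⟫) G g) : g ∈ frontier G := by
  rw [hG.frontier_eq]
  refine ⟨hg, fun hint => hu ?_⟩
  have h := (hmax.isLocalMax (mem_interior_iff_mem_nhds.1 hint)).hasFDerivAt_eq_zero
    (innerSL ℝ u).hasFDerivAt
  simpa using congr($h u)

theorem BallRollsFreely.exists_closedBall_subset_inner_le {G : Set E} {r : ℝ}
    (hroll : BallRollsFreely G r) (hG : IsCompact G) (hne : G.Nonempty) {u : E} (hu : ‖u‖ = 1) :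
    ∃ x, closedBall x r ⊆ G ∧ ∀ y ∈ G, ⟪u, y⟫ ≤ ⟪u, x⟫ + r := by
  obtain ⟨g, hg, hmax⟩ := hG.exists_isMaxOn hne
    (by fun_prop : Continuous fun y : E => ⟪u, y⟫).continuousOn
  obtain ⟨x, hgx, hxG⟩ := hroll g <|
    mem_frontier_of_isMaxOn_inner hG.isClosed (by rintro rfl; simp at hu) hg hmax
  refine ⟨x, hxG, fun y hy => ?_⟩
  have hgx' : ⟪u, g - x⟫ ≤ r := by
    have := real_inner_le_norm u (g - x)
    rw [hu, one_mul, ← dist_eq_norm] at this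
    exact this.trans hgx
  rw [inner_sub_right] at hgx'
  linarith [isMaxOn_iff.1 hmax y hy]

theorem exists_norm_eq_one_inner_add_infDist_le {L : Set E} (hL : IsCompact L)
    (hLcv : Convex ℝ L) (hne : L.Nonempty) {x : E} (hx : 0 < infDist x L) :
    ∃ u, ‖u‖ = 1 ∧ ∀ w ∈ L, ⟪u, w⟫ + infDist x L ≤ ⟪u, x⟫ := by
  obtain ⟨p, hp, hpx⟩ := hL.exists_infDist_eq_dist hne x
  have hxp : 0 < ‖x - p‖ := by rwa [← dist_eq_norm, ← hpx]
  have hproj : ∀ w ∈ L, ⟪x - p, w - p⟫ ≤ 0 := by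
    refine (norm_eq_iInf_iff_real_inner_le_zero hLcv hp).1 ?_
    rw [← dist_eq_norm, ← hpx, infDist_eq_iInf]
    simp only [dist_eq_norm]
  refine ⟨‖x - p‖⁻¹ • (x - p),
    by rw [norm_smul, norm_inv, norm_norm, inv_mul_cancel₀ hxp.ne'], fun w hw => ?_⟩
  have key : ‖x - p‖ ^ 2 ≤ ⟪x - p, x⟫ - ⟪x - p, w⟫ := by
    have e : x - w = (x - p) - (w - p) := by abel
    rw [← inner_sub_right, ← real_inner_self_eq_norm_sq, e, inner_sub_right (x - p) (x - p)]
    linarith [hproj w hw]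
  have := mul_le_mul_of_nonneg_left key (inv_nonneg.2 hxp.le)
  rw [pow_two, ← mul_assoc, inv_mul_cancel₀ hxp.ne', one_mul, mul_sub] at this
  rw [hpx, dist_eq_norm, real_inner_smul_left, real_inner_smul_left]
  linarith

variable [FiniteDimensional ℝ E]

theorem exists_orthonormalBasis_zero_eq {m : ℕ} (hm : finrank ℝ E = m + 1) {u : E}
    (hu : ‖u‖ = 1) :
    ∃ b : OrthonormalBasis (Fin (m + 1)) ℝ E, b 0 = u := by
  have horth : Orthonormal ℝ (({0} : Set (Fin (m + 1))).domRestrict fun _ => u) :=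
    ⟨fun _ => hu, fun i j hij => absurd (Subtype.ext (i.2.trans j.2.symm)) hij⟩
  obtain ⟨b, hb⟩ := horth.exists_orthonormalBasis_extension_of_card_eq (by simpa using hm)
  exact ⟨b, hb 0 rfl⟩

variable [MeasurableSpace E] [BorelSpace E]

theorem ofReal_le_volume_closedBall_inter_cap {u : E} (hu : ‖u‖ = 1) (q : E) {δ s₀ s : ℝ}
    (hδ : 0 < δ) (hδs₀ : δ ≤ s₀) (hs₀s : s₀ ≤ s) :
    ENNReal.ofReal (√(s₀ / (finrank ℝ E + 1)) ^ (finrank ℝ E - 1) / 2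
        * δ ^ (((finrank ℝ E : ℝ) + 1) / 2))
      ≤ volume (closedBall q s ∩ {y | ⟪u, q⟫ + s - δ < ⟪u, y⟫}) := by
  have : Nontrivial E := nontrivial_of_ne u 0 (by rintro rfl; simp at hu)
  obtain ⟨m, hm⟩ : ∃ m, finrank ℝ E = m + 1 :=
    ⟨_, (Nat.succ_pred_eq_of_pos finrank_pos).symm⟩
  obtain ⟨b, hb⟩ := exists_orthonormalBasis_zero_eq hm hu
  have hs₀ : 0 < s₀ := hδ.trans_le hδs₀
  set A := ⟪u, q⟫ + s - δ
  set a := √(δ * s₀ / (m + 2))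
  have ha : a ^ 2 = δ * s₀ / (m + 2) := Real.sq_sqrt (by positivity)
  -- a box in the coordinates of `b`: height `δ / 2` along `u`, width `a` across
  set t : Fin (m + 1) → Set ℝ := Fin.cons (Set.Ioc A (A + δ / 2)) fun i =>
    Set.Icc (b.repr q i.succ - a / 2) (b.repr q i.succ + a / 2)
  have hf : MeasurePreserving (WithLp.ofLp ∘ b.repr) volume volume :=
    (PiLp.volume_preserving_ofLp _).comp b.measurePreserving_repr
  have hvol : volume (WithLp.ofLp ∘ b.repr ⁻¹' Set.univ.pi t) =
      ENNReal.ofReal (δ / 2 * a ^ m) := by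
    rw [hf.measure_preimage (MeasurableSet.univ_pi fun i => ?_).nullMeasurableSet, volume_pi_pi,
      Fin.prod_univ_succ]
    · have hlen : ∀ x : ℝ, x + a / 2 - (x - a / 2) = a := fun x => by ring
      simp only [t, Fin.cons_zero, Fin.cons_succ, Real.volume_Ioc, Real.volume_Icc, hlen,
        add_sub_cancel_left]
      rw [Finset.prod_const, Finset.card_univ, Fintype.card_fin,
        ENNReal.ofReal_mul (by positivity), ENNReal.ofReal_pow (by positivity)]
    · refine Fin.cases ?_ (fun i => ?_) i <;> simp [t, measurableSet_Ioc, measurableSet_Icc]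
  have hbound : √(s₀ / (finrank ℝ E + 1)) ^ (finrank ℝ E - 1) / 2
      * δ ^ (((finrank ℝ E : ℝ) + 1) / 2) = δ / 2 * a ^ m := by
    have ha' : a = √δ * √(s₀ / (m + 2)) := by
      rw [← Real.sqrt_mul hδ.le, ← mul_div_assoc]
    rw [hm, Nat.add_sub_cancel, Real.rpow_div_two_eq_sqrt _ hδ.le, ← Nat.cast_add_one,
      Real.rpow_natCast, ha', mul_pow, pow_succ, pow_succ, mul_assoc (√δ ^ m),
      Real.mul_self_sqrt hδ.le]
    push_cast
    ring_nf
  rw [hbound, ← hvol]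
  refine measure_mono fun y hy => ?_
  have hcoord : ∀ v, b.repr v 0 = ⟪u, v⟫ := fun v => by rw [b.repr_apply_apply, hb]
  have hy0 : ⟪u, y⟫ ∈ Set.Ioc A (A + δ / 2) := hcoord y ▸ hy 0 (Set.mem_univ _)
  have hyi (i : Fin m) :
      b.repr y i.succ ∈ Set.Icc (b.repr q i.succ - a / 2) (b.repr q i.succ + a / 2) :=
    hy i.succ (Set.mem_univ _)
  refine ⟨?_, hy0.1⟩
  rw [mem_closedBall, ← b.repr.dist_map, EuclideanSpace.dist_eq, Real.sqrt_le_left (by linarith),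
    Fin.sum_univ_succ]
  have h0 : dist (b.repr y 0) (b.repr q 0) ^ 2 ≤ (s - δ / 2) ^ 2 := by
    rw [Real.dist_eq, sq_abs, hcoord, hcoord]
    exact sq_le_sq' (by linarith [hy0.1]) (by linarith [hy0.2])
  have hrest : ∑ i : Fin m, dist (b.repr y i.succ) (b.repr q i.succ) ^ 2 ≤ m * (a / 2) ^ 2 := by
    calc _ ≤ ∑ _i : Fin m, (a / 2) ^ 2 := Finset.sum_le_sum fun i _ => by
            rw [Real.dist_eq, sq_abs]
            exact sq_le_sq' (by linarith [(hyi i).1]) (by linarith [(hyi i).2])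
      _ = _ := by simp
  have hwidth : m * (a / 2) ^ 2 ≤ δ * s₀ / 4 := by
    have hm2 : (m : ℝ) / (m + 2) ≤ 1 := (div_le_one (by positivity)).2 (by linarith)
    calc (m : ℝ) * (a / 2) ^ 2 = δ * s₀ / 4 * (m / (m + 2)) := by rw [div_pow, ha]; ring
      _ ≤ δ * s₀ / 4 := mul_le_of_le_one_right (by positivity) hm2
  nlinarith [mul_le_mul_of_nonneg_left hδs₀ hδ.le, mul_le_mul_of_nonneg_left hs₀s hδ.le]

theorem ofReal_le_volume_inter_of_closedBall_subset {C : Set E} (hC : Convex ℝ C) {c z u : E}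
    {r δ : ℝ} (hball : closedBall c r ⊆ C) (hz : z ∈ C) (hu : ‖u‖ = 1) (hδ : 0 < δ)
    (hδr : 2 * δ ≤ r) (hδz : ⟪u, c⟫ + r + 2 * δ ≤ ⟪u, z⟫) :
    ENNReal.ofReal (√(r / 2 / (finrank ℝ E + 1)) ^ (finrank ℝ E - 1) / 2
        * δ ^ (((finrank ℝ E : ℝ) + 1) / 2))
      ≤ volume (C ∩ {y | ⟪u, c⟫ + r < ⟪u, y⟫}) := by
  have hw : 0 < ⟪u, z⟫ - (⟪u, c⟫ + r) := by linarith
  set t := δ / (⟪u, z⟫ - (⟪u, c⟫ + r))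
  have htw : t * (⟪u, z⟫ - (⟪u, c⟫ + r)) = δ := div_mul_cancel₀ δ hw.ne'
  have ht0 : 0 < t := div_pos hδ hw
  have ht : t ≤ 1 / 2 := by rw [div_le_iff₀ hw]; linarith
  -- the ball of radius `r` shrunk towards `z` by the factor `1 - t` pokes `δ` above its top
  have hcap : ⟪u, c + t • (z - c)⟫ + (1 - t) * r - δ = ⟪u, c⟫ + r := by
    rw [inner_add_right, real_inner_smul_right, inner_sub_right]
    linear_combination htw
  calc _ ≤ volume (closedBall (c + t • (z - c)) ((1 - t) * r) ∩
          {y | ⟪u, c + t • (z - c)⟫ + (1 - t) * r - δ < ⟪u, y⟫}) :=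
        ofReal_le_volume_closedBall_inter_cap hu _ hδ (by linarith) (by nlinarith)
    _ ≤ _ := by
      rw [hcap]
      exact measure_mono (Set.inter_subset_inter_left _
        (hC.closedBall_add_smul_sub_subset hball hz ht0.le (by linarith)))

theorem volume_add_add_ofReal_le_volume_add {G L M : Set E} (hGcv : Convex ℝ G)
    (hGcp : IsCompact G) (hGne : G.Nonempty) {r : ℝ} (hroll : BallRollsFreely G r)
    (hLcp : IsCompact L) (hLcv : Convex ℝ L) (hLne : L.Nonempty) (hMcv : Convex ℝ M)
    (hLM : L ⊆ M) {x₀ : E} (hx₀ : x₀ ∈ M) {δ : ℝ} (hδ : 0 < δ) (hδr : 2 * δ ≤ r)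
    (hδx₀ : 2 * δ ≤ infDist x₀ L) :
    volume (G + L) + ENNReal.ofReal (√(r / 2 / (finrank ℝ E + 1)) ^ (finrank ℝ E - 1) / 2
        * δ ^ (((finrank ℝ E : ℝ) + 1) / 2)) ≤ volume (G + M) := by
  obtain ⟨u, hu, hsep⟩ := exists_norm_eq_one_inner_add_infDist_le hLcp hLcv hLne (by linarith)
  obtain ⟨x, hxG, hGu⟩ := hroll.exists_closedBall_subset_inner_le hGcp hGne hu
  obtain ⟨l, hl, hlmax⟩ := hLcp.exists_isMaxOn hLne
    (by fun_prop : Continuous fun y : E => ⟪u, y⟫).continuousOn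
  have hball : closedBall (x + l) r ⊆ G + L := by
    rw [← closedBall_add_singleton]
    exact Set.add_subset_add hxG (Set.singleton_subset_iff.2 hl)
  have hGL : ∀ y ∈ G + L, ⟪u, y⟫ ≤ ⟪u, x + l⟫ + r := by
    rintro _ ⟨g, hg, w, hw, rfl⟩
    rw [inner_add_right, inner_add_right]
    linarith [hGu g hg, isMaxOn_iff.1 hlmax w hw]
  have hr : 0 < r := by linarith
  -- the point of `G` where the ball touches the supporting hyperplane, translated by `x₀`
  have hz : x + r • u + x₀ ∈ G + M :=
    Set.add_mem_add (hxG (by simp [norm_smul, hu, abs_of_pos hr])) hx₀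
  have hzu : ⟪u, x + l⟫ + r + 2 * δ ≤ ⟪u, x + r • u + x₀⟫ := by
    simp only [inner_add_right, real_inner_smul_right, real_inner_self_eq_norm_sq, hu]
    linarith [hsep l hl]
  have hcap := ofReal_le_volume_inter_of_closedBall_subset (hGcv.add hMcv)
    (hball.trans (Set.add_subset_add_left hLM)) hz hu hδ hδr hzu
  have hdisj : Disjoint (G + L) ((G + M) ∩ {y | ⟪u, x + l⟫ + r < ⟪u, y⟫}) :=
    Set.disjoint_left.2 fun y hy hy' => (hGL y hy).not_gt hy'.2
  calc _ ≤ volume (G + L) + volume ((G + M) ∩ {y | ⟪u, x + l⟫ + r < ⟪u, y⟫}) := by gcongr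
    _ = volume (G + L ∪ (G + M) ∩ {y | ⟪u, x + l⟫ + r < ⟪u, y⟫}) :=
      (measure_union' hdisj (hGcp.add hLcp).isClosed.measurableSet).symm
    _ ≤ volume (G + M) :=
      measure_mono (Set.union_subset (Set.add_subset_add_left hLM) Set.inter_subset_left)

theorem volume_add_lt_top {G M : Set E} (hG : IsCompact G) (hMG : M ⊆ G) : volume (G + M) < ⊤ :=
  (measure_mono (Set.add_subset_add_left hMG)).trans_lt (hG.add hG).measure_lt_top

theorem toReal_volume_add_le {G K M : Set E} (hG : IsCompact G) (hKM : K ⊆ M) (hMG : M ⊆ G) :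
    (volume (G + K)).toReal ≤ (volume (G + M)).toReal :=
  ENNReal.toReal_mono (volume_add_lt_top hG hMG).ne (measure_mono (Set.add_subset_add_left hKM))

end InnerProductSpace

section rhoDist

variable {n : ℕ} {G K L : Set (EuclideanSpace ℝ (Fin n))}

theorem rhoDist_comm : rhoDist G K L = rhoDist G L K := by
  simp only [rhoDist, Set.union_comm K L]
  ring

theorem sub_le_rhoDist (hGcv : Convex ℝ G) (hGcp : IsCompact G) (hKG : K ⊆ G) (hLG : L ⊆ G) :
    (volume (G + closure (convexHull ℝ (K ∪ L)))).toReal - (volume (G + L)).toReal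
      ≤ rhoDist G K L := by
  have := toReal_volume_add_le hGcp (subset_closure_convexHull_union_left K L)
    (closure_convexHull_union_subset hGcv hGcp.isClosed hKG hLG)
  unfold rhoDist
  linarith

theorem rhoDist_nonneg (hGcv : Convex ℝ G) (hGcp : IsCompact G) (hKG : K ⊆ G) (hLG : L ⊆ G) :
    0 ≤ rhoDist G K L :=
  (sub_nonneg.2 (toReal_volume_add_le hGcp (subset_closure_convexHull_union_right K L)
    (closure_convexHull_union_subset hGcv hGcp.isClosed hKG hLG))).trans
    (sub_le_rhoDist hGcv hGcp hKG hLG)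

theorem le_rhoDist_of_le_infDist (hGcv : Convex ℝ G) (hGcp : IsCompact G) {r : ℝ}
    (hroll : BallRollsFreely G r) (hKG : K ⊆ G) (hLcp : IsCompact L) (hLcv : Convex ℝ L)
    (hLne : L.Nonempty) (hLG : L ⊆ G) {x₀ : EuclideanSpace ℝ (Fin n)} (hx₀ : x₀ ∈ K) {δ : ℝ}
    (hδ : 0 < δ) (hδr : 2 * δ ≤ r) (hδx₀ : 2 * δ ≤ infDist x₀ L) :
    √(r / 2 / (n + 1)) ^ (n - 1) / 2 * δ ^ (((n : ℝ) + 1) / 2) ≤ rhoDist G K L := by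
  have hMG := closure_convexHull_union_subset hGcv hGcp.isClosed hKG hLG
  have key := volume_add_add_ofReal_le_volume_add hGcv hGcp ⟨x₀, hKG hx₀⟩ hroll hLcp hLcv hLne
    (convex_convexHull ℝ _).closure (subset_closure_convexHull_union_right K L)
    (subset_closure_convexHull_union_left K L hx₀) hδ hδr hδx₀
  rw [finrank_euclideanSpace_fin] at key
  have := ENNReal.toReal_mono (volume_add_lt_top hGcp hMG).ne key
  rw [ENNReal.toReal_add (hGcp.add hLcp).measure_lt_top.ne ENNReal.ofReal_ne_top,
    ENNReal.toReal_ofReal (by positivity)] at this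
  linarith [sub_le_rhoDist hGcv hGcp hKG hLG]

end rhoDist

theorem stmt4_general {n : ℕ} (G : Set (EuclideanSpace ℝ (Fin n)))
    (hGcv : Convex ℝ G) (hGcp : IsCompact G)
    (r : ℝ) (hr : 0 < r)
    (hroll : ∀ p ∈ frontier G, ∃ x : EuclideanSpace ℝ (Fin n),
      p ∈ closedBall x r ∧ closedBall x r ⊆ G) :
    ∃ C : ℝ, 0 < C ∧ ∀ K L : Set (EuclideanSpace ℝ (Fin n)),
      K.Nonempty → IsCompact K → Convex ℝ K → K ⊆ G →
      L.Nonempty → IsCompact L → Convex ℝ L → L ⊆ G →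
      C * hausdorffDist K L ^ (((n : ℝ) + 1) / 2) ≤ rhoDist G K L := by
  set κ := r / (2 * (diam G + r))
  have hD : 0 < diam G + r := by positivity
  have hκ : 2 * κ * (diam G + r) = r := by simp only [κ]; field_simp
  refine ⟨√(r / 2 / (n + 1)) ^ (n - 1) / 2 * κ ^ (((n : ℝ) + 1) / 2),
    mul_pos (by positivity) (Real.rpow_pos_of_pos (by positivity) _), ?_⟩
  intro K L hKne hKcp hKcv hKG hLne hLcp hLcv hLG
  have hdiam : hausdorffDist K L ≤ diam G :=
    (hausdorffDist_le_diam hKne hKcp.isBounded hLne hLcp.isBounded).trans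
      (diam_mono (Set.union_subset hKG hLG) hGcp.isBounded)
  rcases (hausdorffDist_nonneg (s := K) (t := L)).eq_or_lt with h0 | hpos
  · rw [← h0, Real.zero_rpow (by positivity), mul_zero]
    exact rhoDist_nonneg hGcv hGcp hKG hLG
  have hδ : 0 < κ * hausdorffDist K L := mul_pos (by positivity) hpos
  have hδr : 2 * (κ * hausdorffDist K L) ≤ r := by nlinarith
  have hδd : 2 * (κ * hausdorffDist K L) ≤ hausdorffDist K L := by nlinarith
  rw [mul_assoc, ← Real.mul_rpow (by positivity) hpos.le]
  rcases exists_hausdorffDist_le_infDist hKcp hKne hLcp hLne with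
    ⟨x₀, hx₀, hx₀L⟩ | ⟨y₀, hy₀, hy₀K⟩
  · exact le_rhoDist_of_le_infDist hGcv hGcp hroll hKG hLcp hLcv hLne hLG hx₀ hδ hδr
      (hδd.trans hx₀L)
  · rw [rhoDist_comm]
    exact le_rhoDist_of_le_infDist hGcv hGcp hroll hLG hKcp hKcv hKne hKG hy₀ hδ hδr
      (hδd.trans hy₀K)

theorem stmt4 {n : ℕ} (hn : 1 ≤ n) (G : Set (EuclideanSpace ℝ (Fin n)))
    (hGcv : Convex ℝ G) (hGcp : IsCompact G) (hGint : (interior G).Nonempty)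
    (r : ℝ) (hr : 0 < r)
    (hroll : ∀ p ∈ frontier G, ∃ x : EuclideanSpace ℝ (Fin n),
      p ∈ closedBall x r ∧ closedBall x r ⊆ G) :
    ∃ C : ℝ, 0 < C ∧ ∀ K L : Set (EuclideanSpace ℝ (Fin n)),
      K.Nonempty → IsCompact K → Convex ℝ K → K ⊆ G →
      L.Nonempty → IsCompact L → Convex ℝ L → L ⊆ G →
      C * hausdorffDist K L ^ (((n : ℝ) + 1) / 2) ≤ rhoDist G K L :=
  stmt4_general G hGcv hGcp r hr hroll
end
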